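/- For every γ with 4/3 < γ < 3/2, the point (X₀, Y₀) with X₀ = −√6(3γ−4)/(2(3−γ)) and Y₀ = 5(3γ−4)(3−2γ)/(2(3−γ)²) satisfies Y₀ > 0 and 0 < X₀² + Y₀ < 1, and is an equilibrium point of the planar tilt system: both right-hand sides of the planar evolution equations vanish at (X₀, Y₀). Moreover X₀² + Y₀ = (3γ−4)/(2(3−γ)) and T(X₀, Y₀) = 2(3γ−4)/(3−γ). -/
import Mathlib

noncomputable section

namespace CFTilt

/-- the function `T(X,Y)` on the Collinson-French background. -/
def Tpl (γ X Y : ℝ) : ℝ :=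
  (((3*γ - 4) - (Real.sqrt 6/3)*(γ-1)*X) * (1 - X^2 - Y) + (2/3)*(2-γ)*X^2)
    / (1 - (γ-1)*(X^2 + Y))

def FX (γ X Y : ℝ) : ℝ := (Tpl γ X Y - 2/3)*X - (2*Real.sqrt 6/3)*Y

def FY (γ X Y : ℝ) : ℝ := 2*(Tpl γ X Y + (2*Real.sqrt 6/3)*X)*Y

theorem planar_equilibrium (γ : ℝ) (h1 : 4/3 < γ) (h2 : γ < 3/2) :
    let X0 : ℝ := -Real.sqrt 6*(3*γ-4)/(2*(3-γ))
    let Y0 : ℝ := 5*(3*γ-4)*(3-2*γ)/(2*(3-γ)^2)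
    0 < Y0 ∧ 0 < X0^2 + Y0 ∧ X0^2 + Y0 < 1 ∧
    FX γ X0 Y0 = 0 ∧ FY γ X0 Y0 = 0 ∧
    X0^2 + Y0 = (3*γ-4)/(2*(3-γ)) ∧
    Tpl γ X0 Y0 = 2*(3*γ-4)/(3-γ) := by
  intro X0 Y0
  have hs : Real.sqrt 6 ^ 2 = 6 := Real.sq_sqrt (by norm_num)
  have hs4 : Real.sqrt 6 ^ 4 = 36 := by
    have : Real.sqrt 6 ^ 4 = (Real.sqrt 6 ^ 2) ^ 2 := by ring
    rw [this, hs]; norm_num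
  have h3 : (0:ℝ) < 3 - γ := by linarith
  have h4 : (0:ℝ) < 3*γ - 4 := by linarith
  have h5 : (0:ℝ) < 3 - 2*γ := by linarith
  have hY : 0 < Y0 := by
    simp only [Y0]; positivity
  have hsum : X0^2 + Y0 = (3*γ-4)/(2*(3-γ)) := by
    simp only [X0, Y0]
    field_simp
    ring_nf
    simp only [hs, hs4]
    ring
  have hlt : X0^2 + Y0 < 1 := by
    rw [hsum, div_lt_one (by linarith)]; linarith
  have hpos : 0 < X0^2 + Y0 := by rw [hsum]; positivity
  have hden : 1 - (γ-1)*(X0^2 + Y0) ≠ 0 := by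
    rw [hsum]
    have heq : 1 - (γ-1)*((3*γ-4)/(2*(3-γ))) = (3*γ+1)*(2-γ)/(2*(3-γ)) := by
      field_simp; ring
    rw [heq]
    have h6 : (0:ℝ) < 2 - γ := by linarith
    have h7 : (0:ℝ) < 3*γ + 1 := by linarith
    positivity
  have hT : Tpl γ X0 Y0 = 2*(3*γ-4)/(3-γ) := by
    rw [Tpl, div_eq_div_iff hden (by linarith : (3:ℝ)-γ ≠ 0)]
    simp only [X0, Y0]
    field_simp
    ring_nf
    simp only [hs, hs4]
    ring
  refine ⟨hY, hpos, hlt, ?_, ?_, hsum, hT⟩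
  · rw [FX, hT]
    simp only [X0, Y0]
    field_simp
    ring
  · rw [FY, hT]
    simp only [X0, Y0]
    field_simp
    ring_nf
    simp only [hs, hs4]
    ring

end CFTilt
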